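/- arXiv:1204.2109 — 6 statements merged into one kernel-verified Lean document; each statement's English description precedes it below -/
import Mathlib

section
/- Nair–Thomson inequality: for real numbers x_1 ≤ x_2 ≤ ... ≤ x_N with mean μ and variance σ^2 = (1/N) Σ (x_i - μ)^2, one has x_N - x_1 ≤ σ * sqrt(2N). -/
open Finset

/-- Nair–Thomson inequality: for `x 1 ≤ ⋯ ≤ x N` with mean `μ` and variance `σ²`,
`x N - x 1 ≤ σ √(2N)`. -/
theorem stmt_1 (N : ℕ) (hN : 1 ≤ N) (x : ℕ → ℝ)
    (hmono : ∀ i j : ℕ, 1 ≤ i → i ≤ j → j ≤ N → x i ≤ x j)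
    (μ σ : ℝ) (hμ : μ = (1 / N) * ∑ i ∈ Icc 1 N, x i)
    (hσ : σ = Real.sqrt ((1 / N) * ∑ i ∈ Icc 1 N, (x i - μ) ^ 2)) :
    x N - x 1 ≤ σ * Real.sqrt (2 * N) := by
  have hNpos : (0:ℝ) < N := by exact_mod_cast hN
  have hsum_nonneg : (0:ℝ) ≤ ∑ i ∈ Icc 1 N, (x i - μ) ^ 2 :=
    Finset.sum_nonneg fun i _ => sq_nonneg _
  have hv : (0:ℝ) ≤ (1 / N) * ∑ i ∈ Icc 1 N, (x i - μ) ^ 2 := by positivity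
  have hσ0 : 0 ≤ σ := hσ ▸ Real.sqrt_nonneg _
  have hσ2 : σ ^ 2 = (1 / N) * ∑ i ∈ Icc 1 N, (x i - μ) ^ 2 := by
    rw [hσ, Real.sq_sqrt hv]
  have hNσ : (N:ℝ) * σ ^ 2 = ∑ i ∈ Icc 1 N, (x i - μ) ^ 2 := by
    rw [hσ2]; field_simp
  have hrhs0 : 0 ≤ σ * Real.sqrt (2 * N) :=
    mul_nonneg hσ0 (Real.sqrt_nonneg _)
  rcases eq_or_lt_of_le hN with h1 | h2
  · simp [← h1]
    linarith
  · -- N ≥ 2, so 1 ≠ N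
    have hne : (1:ℕ) ≠ N := by omega
    have hsub : ({1, N} : Finset ℕ) ⊆ Icc 1 N := by
      intro i hi
      simp only [mem_insert, mem_singleton] at hi
      rcases hi with rfl | rfl <;> simp [hN] <;> omega
    have hpair : (x 1 - μ) ^ 2 + (x N - μ) ^ 2 ≤ ∑ i ∈ Icc 1 N, (x i - μ) ^ 2 := by
      have := Finset.sum_le_sum_of_subset_of_nonneg hsub
        (fun i _ _ => sq_nonneg (x i - μ))
      rwa [Finset.sum_pair hne] at this
    have hkey : (x N - x 1) ^ 2 ≤ σ ^ 2 * (2 * N) := by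
      have h2' : 2 * ((x 1 - μ) ^ 2 + (x N - μ) ^ 2) ≥ (x N - x 1) ^ 2 := by nlinarith [sq_nonneg (x 1 + x N - 2*μ)]
      nlinarith [hNσ]
    have hsq : (σ * Real.sqrt (2 * N)) ^ 2 = σ ^ 2 * (2 * N) := by
      rw [mul_pow, Real.sq_sqrt (by positivity)]
    nlinarith [hkey, hsq, hrhs0, sq_nonneg (x N - x 1 - σ * Real.sqrt (2 * N))]
end

section
/- For integers N, n, p with 1 ≤ p ≤ n+1 and N ≥ 2, Σ_{2 ≤ m ≤ N} m^2 * C(m-1, p) * C(N-m, n+1-p) = (p+1)(p+2) * C(N+2, n+4) - (p+1) * C(N+1, n+3). -/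
open Finset

/-! Since `m ^ 2 * C(m - 1, p) = (p + 1) (p + 2) C(m + 1, p + 2) - (p + 1) C(m, p + 1)`, the sum splits
into two sums of the form `∑ C(i, a) C(M - i, b)`, each of which is a single binomial coefficient
`C(M + 1, a + b + 1)` by the Chu–Vandermonde identity with upper indices varying. -/

namespace Nat

theorem sum_range_choose_eq_choose_succ (M a : ℕ) :
    ∑ i ∈ range (M + 1), i.choose a = (M + 1).choose (a + 1) := by
  induction M with
  | zero => simp [choose_succ_succ']
  | succ M ih => rw [sum_range_succ, ih, choose_succ_succ' (M + 1), add_comm]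

theorem sum_range_choose_mul_choose_sub (M a b : ℕ) :
    ∑ i ∈ range (M + 1), i.choose a * (M - i).choose b = (M + 1).choose (a + b + 1) := by
  induction b generalizing M with
  | zero => simpa using sum_range_choose_eq_choose_succ M a
  | succ b ihb =>
    induction M with
    | zero => simp [choose_eq_zero_of_lt (show 1 < a + (b + 1) + 1 by omega)]
    | succ M ihM =>
      have pascal : ∀ i ∈ range (M + 1), i.choose a * (M + 1 - i).choose (b + 1)
          = i.choose a * (M - i).choose (b + 1) + i.choose a * (M - i).choose b := by
        intro i hi
        rw [show M + 1 - i = M - i + 1 by grind, choose_succ_succ', mul_add, add_comm]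
      rw [sum_range_succ, Nat.sub_self, choose_zero_succ, mul_zero, add_zero,
        sum_congr rfl pascal, sum_add_distrib, ihM, ihb, choose_succ_succ' (M + 1)]
      ring_nf

theorem sum_range_choose_succ_mul_choose_sub (M a b : ℕ) :
    ∑ i ∈ range (M + 1), (i + 1).choose (a + 1) * (M - i).choose b
      = (M + 2).choose (a + b + 2) := by
  have h := sum_range_choose_mul_choose_sub (M + 1) (a + 1) b
  rw [sum_range_succ'] at h
  simpa [add_right_comm a 1 b] using h

theorem sq_mul_choose_pred_add (m p : ℕ) :
    m ^ 2 * (m - 1).choose p + (p + 1) * m.choose (p + 1)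
      = (p + 1) * (p + 2) * (m + 1).choose (p + 2) := by
  cases m with
  | zero => simp [choose_eq_zero_of_lt (show 1 < p + 2 by omega)]
  | succ m =>
    have h₁ := add_one_mul_choose_eq m p
    have h₂ := add_one_mul_choose_eq (m + 1) (p + 1)
    rw [add_tsub_cancel_right]
    nlinarith

theorem sum_range_sq_mul_choose_pred_mul_choose_sub (N p q : ℕ) :
    ∑ m ∈ range (N + 1), m ^ 2 * (m - 1).choose p * (N - m).choose q
        + (p + 1) * (N + 1).choose (p + q + 2)
      = (p + 1) * (p + 2) * (N + 2).choose (p + q + 3) := by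
  rw [show p + q + 2 = p + 1 + q + 1 by ring, show p + q + 3 = p + 1 + q + 2 by ring,
    ← sum_range_choose_mul_choose_sub, ← sum_range_choose_succ_mul_choose_sub, mul_sum,
    mul_sum, ← sum_add_distrib]
  refine sum_congr rfl fun m _ => ?_
  rw [← mul_assoc, ← mul_assoc, ← add_mul, sq_mul_choose_pred_add]

end Nat

theorem stmt_4_general (N n p : ℕ) (hp : 1 ≤ p) (hpn : p ≤ n + 1) :
    (↑(∑ m ∈ Icc 2 N, m ^ 2 * Nat.choose (m - 1) p * Nat.choose (N - m) (n + 1 - p)) : ℤ)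
      = (p + 1) * (p + 2) * Nat.choose (N + 2) (n + 4)
        - (p + 1) * Nat.choose (N + 1) (n + 3) := by
  have key := Nat.sum_range_sq_mul_choose_pred_mul_choose_sub N p (n + 1 - p)
  rw [show p + (n + 1 - p) + 2 = n + 3 by omega, show p + (n + 1 - p) + 3 = n + 4 by omega] at key
  -- the terms `m = 0` and `m = 1` vanish, the latter because `C(0, p) = 0` for `p ≥ 1`
  have extend : ∑ m ∈ Icc 2 N, m ^ 2 * (m - 1).choose p * (N - m).choose (n + 1 - p)
      = ∑ m ∈ range (N + 1), m ^ 2 * (m - 1).choose p * (N - m).choose (n + 1 - p) := by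
    refine sum_subset (fun m hm => by simp at hm ⊢; omega) fun m hm hm' => ?_
    obtain rfl | rfl : m = 0 ∨ m = 1 := by simp at hm hm'; omega
    · simp
    · simp [Nat.choose_eq_zero_of_lt hp]
  rw [extend, eq_sub_iff_add_eq]
  exact_mod_cast key

/-- `∑_{m=2}^{N} m² C(m-1,p) C(N-m,n+1-p) = (p+1)(p+2) C(N+2,n+4) - (p+1) C(N+1,n+3)`. -/
theorem stmt_4 (N n p : ℕ) (hN : 2 ≤ N) (hp : 1 ≤ p) (hpn : p ≤ n + 1) :
    (↑(∑ m ∈ Icc 2 N, m ^ 2 * Nat.choose (m - 1) p * Nat.choose (N - m) (n + 1 - p)) : ℤ)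
      = (p + 1) * (p + 2) * Nat.choose (N + 2) (n + 4)
        - (p + 1) * Nat.choose (N + 1) (n + 3) :=
  stmt_4_general N n p hp hpn
end

section
/- For integers N, n, p with 1 ≤ p ≤ n+1, Σ_{1 ≤ l < m ≤ N} (m - l)^2 * C(l-1, p-1) * C(N-m, n+1-p) = C(N, n+2) * (N+1)(2N-n) / ((n+3)(n+4)). -/
open Finset

lemma key_sum5 (a : ℕ) : ∀ (M b : ℕ),
    ∑ j ∈ range M, j.choose a * (M - 1 - j).choose b = M.choose (a + b + 1) := by
  intro M
  induction M with
  | zero => simp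
  | succ M ih =>
    intro b
    cases b with
    | zero =>
      simp only [Nat.choose_zero_right, mul_one, Nat.add_zero]
      rw [← Nat.sum_Icc_choose M a]
      refine (Finset.sum_subset ?_ ?_).symm
      · intro x hx
        simp only [mem_Icc] at hx
        simp only [mem_range]; omega
      · intro x hx' hx
        simp only [mem_range] at hx'
        simp only [mem_Icc, not_and, not_le] at hx
        exact Nat.choose_eq_zero_of_lt (by omega)
    | succ b =>
      rw [Finset.sum_range_succ]
      have h0 : (M + 1 - 1 - M).choose (b+1) = 0 := by simp
      rw [h0, mul_zero, add_zero]
      have hcong : ∀ j ∈ range M, j.choose a * (M + 1 - 1 - j).choose (b+1)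
          = j.choose a * (M - 1 - j).choose b + j.choose a * (M - 1 - j).choose (b+1) := by
        intro j hj
        rw [mem_range] at hj
        have h : M + 1 - 1 - j = (M - 1 - j) + 1 := by omega
        rw [h, Nat.choose_succ_succ, Nat.mul_add]
      rw [Finset.sum_congr rfl hcong, Finset.sum_add_distrib, ih b, ih (b+1)]
      have h1 : a + (b+1) + 1 = (a + b + 1) + 1 := by ring
      rw [h1, Nat.choose_succ_succ (M) (a+b+1)]

lemma inner_sum5 (N l c b : ℕ) :
    ∑ m ∈ Icc (l+1) N, (m - l - 1).choose b * (N - m).choose c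
      = (N - l).choose (b + c + 1) := by
  rw [← Finset.Ico_add_one_right_eq_Icc, Finset.sum_Ico_eq_sum_range]
  have h : N + 1 - (l + 1) = N - l := by omega
  rw [h, ← key_sum5 b (N - l) c]
  refine Finset.sum_congr rfl fun j hj => ?_
  rw [mem_range] at hj
  congr 1
  · congr 1; omega
  · congr 1; omega

lemma outer_sum5 (N a q : ℕ) :
    ∑ l ∈ Icc 1 N, (l - 1).choose a * (N - l).choose q = N.choose (a + q + 1) := by
  rw [← Finset.Ico_add_one_right_eq_Icc, Finset.sum_Ico_eq_sum_range, ← key_sum5 a N q]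
  have h : N + 1 - 1 = N := by omega
  rw [h]
  refine Finset.sum_congr rfl fun j hj => ?_
  congr 1
  · congr 1; omega
  · congr 1; omega

lemma sq_expand5 (k : ℕ) : (k + 1) ^ 2 = 2 * k.choose 2 + 3 * k.choose 1 + k.choose 0 := by
  induction k with
  | zero => simp
  | succ k ih =>
    rw [Nat.choose_succ_succ k 1, Nat.choose_succ_succ k 0]
    simp only [Nat.choose_zero_right, Nat.choose_one_right] at *
    ring_nf
    ring_nf at ih
    omega

lemma main_nat5 (N n p : ℕ) (hp : 1 ≤ p) (hpn : p ≤ n + 1) :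
    ∑ l ∈ Icc 1 N, ∑ m ∈ Icc (l+1) N,
        (m - l)^2 * (l - 1).choose (p - 1) * (N - m).choose (n + 1 - p)
      = 2 * N.choose (n + 4) + 3 * N.choose (n + 3) + N.choose (n + 2) := by
  have hsplit : ∀ l ∈ Icc 1 N, ∀ m ∈ Icc (l+1) N,
      (m - l)^2 * (l - 1).choose (p - 1) * (N - m).choose (n + 1 - p)
      = 2 * ((l - 1).choose (p-1) * ((m - l - 1).choose 2 * (N - m).choose (n+1-p)))
        + 3 * ((l - 1).choose (p-1) * ((m - l - 1).choose 1 * (N - m).choose (n+1-p)))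
        + (l - 1).choose (p-1) * ((m - l - 1).choose 0 * (N - m).choose (n+1-p)) := by
    intro l hl m hm
    rw [mem_Icc] at hl hm
    obtain ⟨k, rfl⟩ : ∃ k, m = l + k + 1 := ⟨m - l - 1, by omega⟩
    have h1 : l + k + 1 - l = k + 1 := by omega
    have h2 : l + k + 1 - l - 1 = k := by omega
    rw [h2, h1, sq_expand5 k]
    ring
  have S : ∀ b, ∑ l ∈ Icc 1 N, (l - 1).choose (p-1) *
      ∑ m ∈ Icc (l+1) N, (m - l - 1).choose b * (N - m).choose (n+1-p)
      = N.choose ((p-1) + (b + (n+1-p) + 1) + 1) := by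
    intro b
    rw [← outer_sum5 N (p-1) (b + (n+1-p) + 1)]
    exact Finset.sum_congr rfl fun l _ => by rw [inner_sum5]
  rw [Finset.sum_congr rfl fun l hl => Finset.sum_congr rfl (hsplit l hl)]
  simp only [Finset.sum_add_distrib, ← Finset.mul_sum]
  rw [S 2, S 1, S 0]
  have e1 : p - 1 + (2 + (n + 1 - p) + 1) + 1 = n + 4 := by omega
  have e2 : p - 1 + (1 + (n + 1 - p) + 1) + 1 = n + 3 := by omega
  have e3 : p - 1 + (0 + (n + 1 - p) + 1) + 1 = n + 2 := by omega
  rw [e1, e2, e3]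

/-- `∑_{1 ≤ l < m ≤ N} (m-l)² C(l-1,p-1) C(N-m,n+1-p) = C(N,n+2)(N+1)(2N-n)/((n+3)(n+4))`. -/
theorem stmt_5 (N n p : ℕ) (hN : 2 ≤ N) (hnN : n + 2 ≤ N) (hp : 1 ≤ p) (hpn : p ≤ n + 1) :
    (∑ l ∈ Icc 1 N, ∑ m ∈ Icc (l + 1) N,
        ((m : ℝ) - l) ^ 2 * Nat.choose (l - 1) (p - 1) * Nat.choose (N - m) (n + 1 - p))
      = (Nat.choose N (n + 2) : ℝ) * (N + 1) * (2 * N - n) / ((n + 3) * (n + 4)) := by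
  have hLHS : (∑ l ∈ Icc 1 N, ∑ m ∈ Icc (l + 1) N,
        ((m : ℝ) - l) ^ 2 * Nat.choose (l - 1) (p - 1) * Nat.choose (N - m) (n + 1 - p))
      = ((2 * N.choose (n + 4) + 3 * N.choose (n + 3) + N.choose (n + 2) : ℕ) : ℝ) := by
    rw [← main_nat5 N n p hp hpn]
    push_cast
    refine Finset.sum_congr rfl fun l hl => Finset.sum_congr rfl fun m hm => ?_
    rw [mem_Icc] at hl hm
    have : ((m : ℝ) - l) = ((m - l : ℕ) : ℝ) := by
      push_cast [Nat.cast_sub (by omega : l ≤ m)]; ring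
    rw [this]
  rw [hLHS]
  push_cast
  have h1 : (N.choose (n+3) : ℝ) * ((n : ℝ) + 3)
      = (N.choose (n+2) : ℝ) * ((N : ℝ) - n - 2) := by
    have h : (N.choose (n+3) : ℝ) * ((n : ℝ) + 3)
        = (N.choose (n+2) : ℝ) * ((N - (n+2) : ℕ) : ℝ) := by
      exact_mod_cast Nat.choose_succ_right_eq N (n + 2)
    rw [h, Nat.cast_sub hnN]
    push_cast; ring
  have h2 : (N.choose (n+4) : ℝ) * ((n : ℝ) + 4)
      = (N.choose (n+3) : ℝ) * ((N : ℝ) - n - 3) := by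
    rcases Nat.lt_or_ge N (n + 3) with h | h
    · have hz3 : N.choose (n+3) = 0 := Nat.choose_eq_zero_of_lt (by omega)
      have hz4 : N.choose (n+4) = 0 := Nat.choose_eq_zero_of_lt (by omega)
      rw [hz3, hz4]; push_cast; ring
    · have hh : (N.choose (n+4) : ℝ) * ((n : ℝ) + 4)
          = (N.choose (n+3) : ℝ) * ((N - (n+3) : ℕ) : ℝ) := by
        exact_mod_cast Nat.choose_succ_right_eq N (n + 3)
      rw [hh, Nat.cast_sub h]
      push_cast; ring
  have hd : ((n : ℝ) + 3) * ((n : ℝ) + 4) ≠ 0 := by positivity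
  rw [eq_div_iff hd]
  linear_combination (2*((n:ℝ)+3))*h2 + (3*((n:ℝ)+4) + 2*((N:ℝ)-n-3))*h1
end

section
/- Suppose x_1 ≤ ... ≤ x_N are reals satisfying |x_m - x_l| ≤ C N^{-δ} (m - l) for all 1 ≤ l < m ≤ N, where C > 0 and 1/2 < δ ≤ 1. Then for 1 ≤ p ≤ n+1 and n+2 ≤ N, C(N, n+2)^{-1} Σ_{1 ≤ l < m ≤ N} C(l-1, p-1) C(N-m, n+1-p) (x_m - x_l)^2 ≤ (C^2 / N^{2δ}) * (N+1)(2N-n)/((n+3)(n+4)). -/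
open Finset

lemma hockey (t α : ℕ) : ∑ a ∈ range (t+1), Nat.choose a α = Nat.choose (t+1) (α+1) := by
  induction t with
  | zero =>
    cases α <;> simp [Nat.choose]
  | succ t ih =>
    rw [Finset.sum_range_succ, ih, Nat.choose_succ_succ' (t+1), Nat.add_comm]

lemma vander (s : ℕ) : ∀ β α : ℕ, ∑ a ∈ range (s+1), Nat.choose a α * Nat.choose (s-a) β
    = Nat.choose (s+1) (α+β+1) := by
  induction s with
  | zero =>
    intro β α
    cases α <;> cases β <;> simp [Nat.choose]
  | succ s ih =>
    intro β α
    cases β with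
    | zero =>
      simpa using hockey (s+1) α
    | succ β =>
      rw [Finset.sum_range_succ]
      have h1 : ∀ a ∈ range (s+1), Nat.choose a α * Nat.choose (s+1-a) (β+1)
          = Nat.choose a α * Nat.choose (s-a) β + Nat.choose a α * Nat.choose (s-a) (β+1) := by
        intro a ha
        have : s + 1 - a = (s - a) + 1 := by
          simp only [mem_range] at ha; omega
        rw [this, Nat.choose_succ_succ, Nat.mul_add]
      rw [Finset.sum_congr rfl h1, Finset.sum_add_distrib, ih β α, ih (β+1) α]
      simp only [Nat.sub_self, Nat.choose_zero_succ, Nat.mul_zero, Nat.add_zero]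
      rw [show α + (β+1) + 1 = (α + β + 1) + 1 by omega, Nat.choose_succ_succ' (s+1) (α+β+1)]

lemma vander_shift (s c q γ : ℕ) (hc : c ≤ γ) :
    ∑ j ∈ range (s+1), Nat.choose (j+c) γ * Nat.choose (s-j) q
      = Nat.choose (s+c+1) (γ+q+1) := by
  have h := vander (s+c) q γ
  rw [Finset.range_eq_Ico, ← Finset.sum_Ico_consecutive _ (Nat.zero_le c) (by omega : c ≤ s+c+1)]
    at h
  have h0 : ∑ a ∈ Ico 0 c, Nat.choose a γ * Nat.choose (s+c-a) q = 0 := by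
    apply Finset.sum_eq_zero
    intro a ha
    simp only [mem_Ico] at ha
    rw [Nat.choose_eq_zero_of_lt (by omega), Nat.zero_mul]
  rw [h0, Nat.zero_add, Finset.sum_Ico_eq_sum_range] at h
  rw [show s + c + 1 - c = s + 1 by omega] at h
  rw [← h]
  apply Finset.sum_congr rfl
  intro j hj
  rw [Nat.add_comm c j, show s + c - (j + c) = s - j by omega]

lemma vander_shift' (s c r Q : ℕ) (hc : c ≤ Q) :
    ∑ a ∈ range (s+1), Nat.choose a r * Nat.choose (s+c-a) Q
      = Nat.choose (s+c+1) (r+Q+1) := by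
  have h := vander (s+c) Q r
  rw [Finset.range_eq_Ico, ← Finset.sum_Ico_consecutive _ (Nat.zero_le (s+1))
    (by omega : s+1 ≤ s+c+1)] at h
  have h0 : ∑ a ∈ Ico (s+1) (s+c+1), Nat.choose a r * Nat.choose (s+c-a) Q = 0 := by
    apply Finset.sum_eq_zero
    intro a ha
    simp only [mem_Ico] at ha
    rw [Nat.choose_eq_zero_of_lt (show s+c-a < Q by omega), Nat.mul_zero]
  rw [h0, Nat.add_zero, ← Finset.range_eq_Ico] at h
  exact h

lemma double_sum_eq (N r q c γ : ℕ) (hcγ : c ≤ γ) (hN : 1 ≤ N) :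
    ∑ l ∈ Icc 1 N, ∑ m ∈ Icc (l+1) N,
        Nat.choose (l-1) r * Nat.choose (N-m) q * Nat.choose (m-l-1+c) γ
      = Nat.choose (N+c) (r+q+γ+2) := by
  have hinner : ∀ l ∈ Icc 1 N, ∑ m ∈ Icc (l+1) N,
      Nat.choose (l-1) r * Nat.choose (N-m) q * Nat.choose (m-l-1+c) γ
      = Nat.choose (l-1) r * Nat.choose (N-l+c) (γ+q+1) := by
    intro l hl
    simp only [mem_Icc] at hl
    simp only [Nat.mul_assoc]
    rw [← Finset.mul_sum]
    congr 1
    have hIcc : Icc (l+1) N = Ico (l+1) (N+1) := by rw [Finset.Ico_add_one_right_eq_Icc]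
    rw [hIcc, Finset.sum_Ico_eq_sum_range, show N + 1 - (l+1) = N - l by omega]
    rcases Nat.eq_or_lt_of_le hl.2 with hEq | hLt
    · subst hEq
      rw [Nat.sub_self, Finset.range_zero, Finset.sum_empty,
        Nat.choose_eq_zero_of_lt (by omega)]
    · have hs : N - l = (N - l - 1) + 1 := by omega
      rw [hs]
      have hcong : ∀ j ∈ range ((N-l-1)+1),
          Nat.choose (N - (l+1+j)) q * Nat.choose (l+1+j-l-1+c) γ
          = Nat.choose (j+c) γ * Nat.choose ((N-l-1)-j) q := by
        intro j hj
        simp only [mem_range] at hj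
        rw [show N - (l+1+j) = (N-l-1)-j by omega, show l+1+j-l-1+c = j+c by omega,
          Nat.mul_comm]
      rw [Finset.sum_congr rfl hcong, vander_shift (N-l-1) c q γ hcγ]
      congr 1
      omega
  rw [Finset.sum_congr rfl hinner]
  have hIcc : Icc 1 N = Ico 1 (N+1) := by rw [Finset.Ico_add_one_right_eq_Icc]
  rw [hIcc, Finset.sum_Ico_eq_sum_range, show N + 1 - 1 = N by omega]
  have hs : N = (N - 1) + 1 := by omega
  rw [hs]
  have hcong : ∀ a ∈ range ((N-1)+1),
      Nat.choose (1+a-1) r * Nat.choose ((N-1)+1-(1+a)+c) (γ+q+1)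
      = Nat.choose a r * Nat.choose ((N-1)+c-a) (γ+q+1) := by
    intro a ha
    simp only [mem_range] at ha
    rw [show 1+a-1 = a by omega, show (N-1)+1-(1+a)+c = (N-1)+c-a by omega]
  rw [Finset.sum_congr rfl hcong, vander_shift' (N-1) c r (γ+q+1) (by omega),
    show N-1+c+1 = N-1+1+c by omega, show r+(γ+q+1)+1 = r+q+γ+2 by omega]
open Finset

/-- Under the finite population smoothness condition `|x m - x l| ≤ C N^{-δ} (m - l)`,
the weighted sum `C(N,n+2)⁻¹ ∑_{l<m} C(l-1,p-1) C(N-m,n+1-p) (x m - x l)²` is at most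
`(C²/N^{2δ}) (N+1)(2N-n)/((n+3)(n+4))`. -/
theorem stmt_12 (N n p : ℕ) (x : ℕ → ℝ) (C δ : ℝ)
    (hC : 0 < C) (hδ1 : 1 / 2 < δ) (hδ2 : δ ≤ 1)
    (hmono : ∀ i j : ℕ, 1 ≤ i → i ≤ j → j ≤ N → x i ≤ x j)
    (hsmooth : ∀ l m : ℕ, 1 ≤ l → l < m → m ≤ N →
      |x m - x l| ≤ C * (N : ℝ) ^ (-δ) * ((m : ℝ) - l))
    (hp : 1 ≤ p) (hpn : p ≤ n + 1) (hnN : n + 2 ≤ N) :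
    (Nat.choose N (n + 2) : ℝ)⁻¹
        * ∑ l ∈ Icc 1 N, ∑ m ∈ Icc (l + 1) N,
            (Nat.choose (l - 1) (p - 1) : ℝ) * Nat.choose (N - m) (n + 1 - p)
              * (x m - x l) ^ 2
      ≤ C ^ 2 / (N : ℝ) ^ (2 * δ) * ((N : ℝ) + 1) * (2 * N - n) / ((n + 3) * (n + 4)) := by
  have hN1 : 1 ≤ N := by omega
  have hN0 : (0:ℝ) < N := by exact_mod_cast Nat.pos_of_ne_zero (by omega)
  set K : ℝ := (C * (N : ℝ) ^ (-δ))^2 with hKdef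
  -- nat identities
  have hnat1 : (∑ l ∈ Icc 1 N, ∑ m ∈ Icc (l+1) N,
      Nat.choose (l-1) (p-1) * Nat.choose (N-m) (n+1-p) * Nat.choose (m-l-1+1) 1)
      = Nat.choose (N+1) (n+3) := by
    rw [double_sum_eq N (p-1) (n+1-p) 1 1 le_rfl hN1]
    congr 1; omega
  have hnat2 : (∑ l ∈ Icc 1 N, ∑ m ∈ Icc (l+1) N,
      Nat.choose (l-1) (p-1) * Nat.choose (N-m) (n+1-p) * Nat.choose (m-l-1+2) 2)
      = Nat.choose (N+2) (n+4) := by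
    rw [double_sum_eq N (p-1) (n+1-p) 2 2 le_rfl hN1]
    congr 1; omega
  set C0 : ℝ := (Nat.choose N (n+2) : ℝ) with hC0def
  set C1 : ℝ := (Nat.choose (N+1) (n+3) : ℝ) with hC1def
  set C2 : ℝ := (Nat.choose (N+2) (n+4) : ℝ) with hC2def
  -- the real weighted sum of (m-l)^2
  have hT : ∑ l ∈ Icc 1 N, ∑ m ∈ Icc (l+1) N,
      (Nat.choose (l-1) (p-1) : ℝ) * Nat.choose (N-m) (n+1-p) * ((m:ℝ) - l)^2
      = 2 * C2 - C1 := by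
    have e1 : ∀ l ∈ Icc 1 N, ∀ m ∈ Icc (l+1) N,
        (Nat.choose (l-1) (p-1) : ℝ) * Nat.choose (N-m) (n+1-p) * ((m:ℝ) - l)^2
        = 2 * ((Nat.choose (l-1) (p-1) * Nat.choose (N-m) (n+1-p)
              * Nat.choose (m-l-1+2) 2 : ℕ) : ℝ)
          - ((Nat.choose (l-1) (p-1) * Nat.choose (N-m) (n+1-p)
              * Nat.choose (m-l-1+1) 1 : ℕ) : ℝ) := by
      intro l hl m hm
      simp only [mem_Icc] at hl hm
      have h1 : m - l - 1 + 1 = m - l := by omega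
      have h2 : m - l - 1 + 2 = m - l + 1 := by omega
      have hd : ((m - l : ℕ) : ℝ) = (m:ℝ) - l := by
        push_cast [Nat.cast_sub (by omega : l ≤ m)]; ring
      rw [h1, h2, Nat.choose_one_right]
      push_cast
      rw [Nat.cast_choose_two]
      push_cast [Nat.cast_sub (by omega : l ≤ m)]
      ring
    rw [Finset.sum_congr rfl (fun l hl => Finset.sum_congr rfl (e1 l hl))]
    simp only [Finset.sum_sub_distrib, ← Finset.mul_sum]
    rw [hC1def, hC2def, ← hnat1, ← hnat2]
    push_cast
    ring
  -- bound the actual sum by K times the (m-l)^2 sum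
  have hS : ∑ l ∈ Icc 1 N, ∑ m ∈ Icc (l + 1) N,
      (Nat.choose (l - 1) (p - 1) : ℝ) * Nat.choose (N - m) (n + 1 - p) * (x m - x l) ^ 2
      ≤ K * (2 * C2 - C1) := by
    rw [← hT, Finset.mul_sum]
    apply Finset.sum_le_sum
    intro l hl
    rw [Finset.mul_sum]
    apply Finset.sum_le_sum
    intro m hm
    simp only [mem_Icc] at hl hm
    have hb : (x m - x l)^2 ≤ (C * (N:ℝ)^(-δ) * ((m:ℝ) - l))^2 := by
      have h := hsmooth l m hl.1 (by omega) hm.2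
      calc (x m - x l)^2 = |x m - x l|^2 := (sq_abs _).symm
        _ ≤ (C * (N:ℝ)^(-δ) * ((m:ℝ) - l))^2 :=
          pow_le_pow_left₀ (abs_nonneg _) h 2
    have hw : (0:ℝ) ≤ (Nat.choose (l-1) (p-1) : ℝ) * Nat.choose (N-m) (n+1-p) := by
      positivity
    calc (Nat.choose (l-1) (p-1) : ℝ) * Nat.choose (N-m) (n+1-p) * (x m - x l)^2
        ≤ (Nat.choose (l-1) (p-1) : ℝ) * Nat.choose (N-m) (n+1-p)
          * (C * (N:ℝ)^(-δ) * ((m:ℝ) - l))^2 := by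
          apply mul_le_mul_of_nonneg_left hb hw
      _ = K * ((Nat.choose (l-1) (p-1) : ℝ) * Nat.choose (N-m) (n+1-p) * ((m:ℝ) - l)^2) := by
          rw [hKdef]; ring
  -- choose relations
  have hA : ((N:ℝ)+1) * C0 = C1 * ((n:ℝ)+3) := by
    have := Nat.add_one_mul_choose_eq N (n+2)
    rw [hC0def, hC1def]
    exact_mod_cast this
  have hB : ((N:ℝ)+2) * C1 = C2 * ((n:ℝ)+4) := by
    have := Nat.add_one_mul_choose_eq (N+1) (n+3)
    rw [hC1def, hC2def]
    exact_mod_cast this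
  have hC0pos : (0:ℝ) < C0 := by
    rw [hC0def]
    exact_mod_cast Nat.choose_pos hnN
  have hKval : K = C^2 / (N:ℝ)^(2*δ) := by
    rw [hKdef, mul_pow, sq ((N:ℝ)^(-δ)), ← Real.rpow_add hN0,
      show -δ + -δ = -(2*δ) by ring, Real.rpow_neg hN0.le, div_eq_mul_inv]
  have hn3 : ((n:ℝ)+3) ≠ 0 := by positivity
  have hn4 : ((n:ℝ)+4) ≠ 0 := by positivity
  have hc1 : C1 = ((N:ℝ)+1) * C0 / ((n:ℝ)+3) := by
    field_simp
    linarith [hA]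
  have hc2 : C2 = ((N:ℝ)+2) * C1 / ((n:ℝ)+4) := by
    field_simp
    linarith [hB]
  have heq : C0⁻¹ * (K * (2 * C2 - C1))
      = C ^ 2 / (N : ℝ) ^ (2 * δ) * ((N : ℝ) + 1) * (2 * (N:ℝ) - n) / (((n:ℝ) + 3) * ((n:ℝ) + 4)) := by
    rw [hKval, hc2, hc1]
    field_simp
    try ring
  calc (Nat.choose N (n + 2) : ℝ)⁻¹ * ∑ l ∈ Icc 1 N, ∑ m ∈ Icc (l + 1) N,
        (Nat.choose (l - 1) (p - 1) : ℝ) * Nat.choose (N - m) (n + 1 - p) * (x m - x l) ^ 2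
      ≤ C0⁻¹ * (K * (2 * C2 - C1)) := by
        apply mul_le_mul_of_nonneg_left hS (by positivity)
    _ = _ := heq
end

section
/- Let x_1 ≤ ... ≤ x_N be reals satisfying |x_m - x_l| ≤ C N^{-δ} (m - l) for all 1 ≤ l < m ≤ N, with C > 0 and 1/2 < δ ≤ 1. Define g_1(x_k) = -n^{-1/2} Σ_{j=1}^{n} c_j Σ_{i=1}^{N-1} (1{i ≥ k} - i/N) C(i-1, j-1) C(N-i-1, n-j) C(N-2, n-1)^{-1} (x_{i+1} - x_i), with weights satisfying max_j |c_j| ≤ a. Then max_{1 ≤ k ≤ N} |g_1(x_k)| ≤ (aC/2) n^{-1/2} N^{-δ} (N-1). -/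
open Finset

private lemma gauss_real (m : ℕ) : ∑ i ∈ range m, (i : ℝ) = m * (m - 1) / 2 := by
  induction m with
  | zero => simp
  | succ m ih =>
    rw [Finset.sum_range_succ, ih]
    push_cast
    ring

private lemma vand (N n i : ℕ) (hN : 2 ≤ N) (hn : 1 ≤ n) (hi1 : 1 ≤ i) (hiN : i ≤ N - 1) :
    ∑ j ∈ Icc 1 n, ((i - 1).choose (j - 1) * (N - i - 1).choose (n - j) : ℕ)
      = (N - 2).choose (n - 1) := by
  have h1 : Icc 1 n = Ico 1 (n + 1) := by rw [Finset.Ico_add_one_right_eq_Icc]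
  rw [h1, Finset.sum_Ico_eq_sum_range]
  have h2 : (N - 2) = (i - 1) + (N - i - 1) := by omega
  rw [h2, Nat.add_choose_eq, Finset.Nat.sum_antidiagonal_eq_sum_range_succ_mk]
  refine Finset.sum_congr (by congr 1; omega) fun m hm => ?_
  simp only [show 1 + m - 1 = m from by omega, show n - (1 + m) = n - 1 - m from by omega]

private lemma weight_sum (N k : ℕ) (hN : 2 ≤ N) (hk1 : 1 ≤ k) (hkN : k ≤ N) :
    ∑ i ∈ Icc 1 (N - 1), |(if k ≤ i then (1 : ℝ) else 0) - (i : ℝ) / N|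
      ≤ ((N : ℝ) - 1) / 2 := by
  have hN0 : (0 : ℝ) < N := by positivity
  have hIcc : Icc 1 (N - 1) = Ico 1 N := by
    rw [← Finset.Ico_add_one_right_eq_Icc]
    congr 1
    omega
  rw [hIcc, ← Finset.sum_Ico_consecutive _ hk1 hkN]
  have e1 : ∑ i ∈ Ico 1 k, |(if k ≤ i then (1 : ℝ) else 0) - (i : ℝ) / N|
      = ∑ i ∈ Ico 1 k, (i : ℝ) / N := by
    refine Finset.sum_congr rfl fun i hi => ?_
    rw [Finset.mem_Ico] at hi
    rw [if_neg (by omega), zero_sub, abs_neg, abs_of_nonneg (by positivity)]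
  have e2 : ∑ i ∈ Ico k N, |(if k ≤ i then (1 : ℝ) else 0) - (i : ℝ) / N|
      = ∑ i ∈ Ico k N, (1 - (i : ℝ) / N) := by
    refine Finset.sum_congr rfl fun i hi => ?_
    rw [Finset.mem_Ico] at hi
    rw [if_pos hi.1, abs_of_nonneg]
    have : (i : ℝ) ≤ N := by exact_mod_cast hi.2.le
    have : (i : ℝ) / N ≤ 1 := by rw [div_le_one hN0]; exact this
    linarith
  rw [e1, e2]
  have s1 : ∑ i ∈ Ico 1 k, (i : ℝ) = k * (k - 1) / 2 := by
    rw [← gauss_real k, Finset.range_eq_Ico,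
      ← Finset.sum_Ico_consecutive (fun i => (i : ℝ)) (Nat.zero_le 1) hk1]
    simp
  have s2 : ∑ i ∈ Ico k N, (i : ℝ) = N * (N - 1) / 2 - k * (k - 1) / 2 := by
    have := Finset.sum_Ico_consecutive (fun i => (i : ℝ)) (Nat.zero_le k) hkN
    have hr : ∑ i ∈ Ico 0 N, (i : ℝ) = N * (N - 1) / 2 := by
      rw [← Finset.range_eq_Ico]; exact gauss_real N
    have hk : ∑ i ∈ Ico 0 k, (i : ℝ) = k * (k - 1) / 2 := by
      rw [← Finset.range_eq_Ico]; exact gauss_real k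
    rw [hk, hr] at this
    linarith
  have scard : ((Ico k N).card : ℝ) = (N : ℝ) - k := by
    rw [Nat.card_Ico]
    have : (k : ℝ) ≤ N := by exact_mod_cast hkN
    push_cast [Nat.cast_sub hkN]
    ring
  rw [Finset.sum_sub_distrib, Finset.sum_const, nsmul_eq_mul, mul_one]
  rw [← Finset.sum_div, ← Finset.sum_div, s1, s2, scard]
  have hk1' : (1 : ℝ) ≤ k := by exact_mod_cast hk1
  have hkN' : (k : ℝ) ≤ N := by exact_mod_cast hkN
  have key : (0:ℝ) ≤ ((k:ℝ) - 1) * ((N:ℝ) - k) := mul_nonneg (by linarith) (by linarith)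
  have expand : (k:ℝ) * (k - 1) / 2 / N + ((N:ℝ) - k - ((N:ℝ) * (N - 1) / 2 - k * (k - 1) / 2) / N)
      = ((k:ℝ) * (k - 1) + 2 * N * (N - k) - ((N:ℝ) * (N - 1) - k * (k - 1))) / (2 * N) := by
    field_simp
    ring
  rw [expand, div_le_div_iff₀ (by positivity) (by norm_num : (0:ℝ) < 2)]
  nlinarith [key]

/-- Under the smoothness condition `|x m - x l| ≤ C N^{-δ} (m - l)` and bounded weights
`|c j| ≤ a`, the linear part `g₁` of the Hoeffding decomposition of an `L`-statistic
satisfies `max_{1 ≤ k ≤ N} |g₁(x k)| ≤ (aC/2) n^{-1/2} N^{-δ} (N - 1)`. -/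
theorem stmt_13 (N n : ℕ) (x : ℕ → ℝ) (c : ℕ → ℝ) (a C δ : ℝ)
    (hn : 1 ≤ n) (hnN : n ≤ N - 1) (hN : 2 ≤ N)
    (ha : 0 < a) (hc : ∀ j, 1 ≤ j → j ≤ n → |c j| ≤ a)
    (hC : 0 < C) (hδ1 : 1 / 2 < δ) (hδ2 : δ ≤ 1)
    (hmono : ∀ i j : ℕ, 1 ≤ i → i ≤ j → j ≤ N → x i ≤ x j)
    (hsmooth : ∀ l m : ℕ, 1 ≤ l → l < m → m ≤ N →
      |x m - x l| ≤ C * (N : ℝ) ^ (-δ) * ((m : ℝ) - l))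
    (g₁ : ℕ → ℝ)
    (hg₁ : ∀ k, g₁ k =
      -(n : ℝ) ^ (-(1 / 2 : ℝ)) * ∑ j ∈ Icc 1 n, c j *
        ∑ i ∈ Icc 1 (N - 1),
          ((if k ≤ i then (1 : ℝ) else 0) - (i : ℝ) / N)
            * ((Nat.choose (i - 1) (j - 1) : ℝ) * Nat.choose (N - i - 1) (n - j)
                / Nat.choose (N - 2) (n - 1))
            * (x (i + 1) - x i)) :
    ∀ k, 1 ≤ k → k ≤ N →
      |g₁ k| ≤ a * C / 2 * (n : ℝ) ^ (-(1 / 2 : ℝ)) * (N : ℝ) ^ (-δ) * ((N : ℝ) - 1) := by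
  intro k hk1 hkN
  have hNpos : (0 : ℝ) < N := by positivity
  have ht : (0 : ℝ) ≤ (n : ℝ) ^ (-(1 / 2 : ℝ)) := Real.rpow_nonneg (Nat.cast_nonneg n) _
  have hp : (0 : ℝ) ≤ C * (N : ℝ) ^ (-δ) :=
    mul_nonneg hC.le (Real.rpow_nonneg (Nat.cast_nonneg N) _)
  have hDpos : (0 : ℝ) < ((N - 2).choose (n - 1) : ℝ) := by
    have : 0 < (N - 2).choose (n - 1) := Nat.choose_pos (by omega)
    exact_mod_cast this
  -- abbreviations
  set w : ℕ → ℝ := fun i => |(if k ≤ i then (1 : ℝ) else 0) - (i : ℝ) / N| with hw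
  set r : ℕ → ℕ → ℝ := fun i j =>
    ((i - 1).choose (j - 1) : ℝ) * ((N - i - 1).choose (n - j) : ℝ)
      / ((N - 2).choose (n - 1) : ℝ) with hr
  have hrnn : ∀ i j, 0 ≤ r i j := fun i j => by positivity
  have hwnn : ∀ i, 0 ≤ w i := fun i => abs_nonneg _
  have hdnn : ∀ i ∈ Icc 1 (N - 1), 0 ≤ x (i + 1) - x i := by
    intro i hi
    rw [Finset.mem_Icc] at hi
    have := hmono i (i + 1) hi.1 (Nat.le_succ i) (by omega)
    linarith
  have hdle : ∀ i ∈ Icc 1 (N - 1), x (i + 1) - x i ≤ C * (N : ℝ) ^ (-δ) := by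
    intro i hi
    rw [Finset.mem_Icc] at hi
    have h := hsmooth i (i + 1) hi.1 (Nat.lt_succ_self i) (by omega)
    have h2 : ((i : ℝ) + 1) - i = 1 := by ring
    rw [Nat.cast_add, Nat.cast_one, h2, mul_one] at h
    calc x (i + 1) - x i ≤ |x (i + 1) - x i| := le_abs_self _
      _ ≤ C * (N : ℝ) ^ (-δ) := h
  -- key bound on the double sum
  have key : |∑ j ∈ Icc 1 n, c j *
      ∑ i ∈ Icc 1 (N - 1),
        ((if k ≤ i then (1 : ℝ) else 0) - (i : ℝ) / N) * r i j * (x (i + 1) - x i)|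
      ≤ a * (C * (N : ℝ) ^ (-δ)) * (((N : ℝ) - 1) / 2) := by
    calc |∑ j ∈ Icc 1 n, c j * ∑ i ∈ Icc 1 (N - 1),
          ((if k ≤ i then (1 : ℝ) else 0) - (i : ℝ) / N) * r i j * (x (i + 1) - x i)|
        ≤ ∑ j ∈ Icc 1 n, |c j * ∑ i ∈ Icc 1 (N - 1),
          ((if k ≤ i then (1 : ℝ) else 0) - (i : ℝ) / N) * r i j * (x (i + 1) - x i)| :=
          Finset.abs_sum_le_sum_abs _ _
      _ ≤ ∑ j ∈ Icc 1 n, a * ∑ i ∈ Icc 1 (N - 1), w i * r i j * (x (i + 1) - x i) := by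
          refine Finset.sum_le_sum fun j hj => ?_
          rw [Finset.mem_Icc] at hj
          rw [abs_mul]
          refine mul_le_mul (hc j hj.1 hj.2) ?_ (abs_nonneg _) ha.le
          calc |∑ i ∈ Icc 1 (N - 1),
                ((if k ≤ i then (1 : ℝ) else 0) - (i : ℝ) / N) * r i j * (x (i + 1) - x i)|
              ≤ ∑ i ∈ Icc 1 (N - 1),
                |((if k ≤ i then (1 : ℝ) else 0) - (i : ℝ) / N) * r i j * (x (i + 1) - x i)| :=
                Finset.abs_sum_le_sum_abs _ _
            _ = ∑ i ∈ Icc 1 (N - 1), w i * r i j * (x (i + 1) - x i) := by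
                refine Finset.sum_congr rfl fun i hi => ?_
                rw [abs_mul, abs_mul, abs_of_nonneg (hrnn i j),
                  abs_of_nonneg (hdnn i hi)]
      _ = a * ∑ i ∈ Icc 1 (N - 1), (w i * (x (i + 1) - x i)) * ∑ j ∈ Icc 1 n, r i j := by
          rw [← Finset.mul_sum, Finset.sum_comm]
          congr 1
          refine Finset.sum_congr rfl fun i _ => ?_
          rw [Finset.mul_sum]
          refine Finset.sum_congr rfl fun j _ => ?_
          ring
      _ = a * ∑ i ∈ Icc 1 (N - 1), w i * (x (i + 1) - x i) := by
          congr 1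
          refine Finset.sum_congr rfl fun i hi => ?_
          rw [Finset.mem_Icc] at hi
          have hsum : ∑ j ∈ Icc 1 n, r i j = 1 := by
            have hv := vand N n i hN hn hi.1 hi.2
            simp only [hr]
            rw [← Finset.sum_div]
            rw [div_eq_one_iff_eq hDpos.ne']
            push_cast [← hv]
            rfl
          rw [hsum, mul_one]
      _ ≤ a * ∑ i ∈ Icc 1 (N - 1), w i * (C * (N : ℝ) ^ (-δ)) := by
          refine mul_le_mul_of_nonneg_left (Finset.sum_le_sum fun i hi => ?_) ha.le
          exact mul_le_mul_of_nonneg_left (hdle i hi) (hwnn i)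
      _ = a * (C * (N : ℝ) ^ (-δ)) * ∑ i ∈ Icc 1 (N - 1), w i := by
          rw [← Finset.sum_mul]
          ring
      _ ≤ a * (C * (N : ℝ) ^ (-δ)) * (((N : ℝ) - 1) / 2) := by
          refine mul_le_mul_of_nonneg_left ?_ (mul_nonneg ha.le hp)
          exact weight_sum N k hN hk1 hkN
  rw [hg₁ k]
  rw [neg_mul, abs_neg, abs_mul, abs_of_nonneg ht]
  calc (n : ℝ) ^ (-(1 / 2 : ℝ)) * |∑ j ∈ Icc 1 n, c j *
        ∑ i ∈ Icc 1 (N - 1),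
          ((if k ≤ i then (1 : ℝ) else 0) - (i : ℝ) / N) * r i j * (x (i + 1) - x i)|
      ≤ (n : ℝ) ^ (-(1 / 2 : ℝ)) * (a * (C * (N : ℝ) ^ (-δ)) * (((N : ℝ) - 1) / 2)) :=
        mul_le_mul_of_nonneg_left key ht
    _ = a * C / 2 * (n : ℝ) ^ (-(1 / 2 : ℝ)) * (N : ℝ) ^ (-δ) * ((N : ℝ) - 1) := by ring
end

section
/- For integers n ≥ 2, N with n + 2 ≤ N, and any 1 ≤ l < m ≤ N, the quantity λ = Σ_{1 ≤ i < j ≤ n+2} [ (i-1)(n+2-j)/C(n+2,4) ] * [ C(l-1,i-1) C(m-l-1,j-i-1) C(N-m,n+2-j) / C(N,n+2) ] satisfies λ ≤ 24 / N^2. -/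
/-!
Each weight (i-1)(n+2-j) is at most n²/4, since its two factors are nonnegative with sum at most
n. What remains is the total mass ∑ C(l-1,i-1) C(m-l-1,j-i-1) C(N-m,n+2-j), which a double
Vandermonde convolution evaluates to C(N-2,n). Since C(N,n+2) = N(N-1)/((n+2)(n+1)) C(N-2,n), the
bound becomes 6n/((n-1)N(N-1)) ≤ 24/N², i.e. nN ≤ 4(n-1)(N-1).
-/
open Finset

theorem Nat.sum_Icc_choose_mul_choose (b c s d : ℕ) :
    ∑ j ∈ Icc s (s + d), b.choose (j - s) * c.choose (s + d - j) = (b + c).choose d := by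
  rw [← Ico_add_one_right_eq_Icc, sum_Ico_eq_sum_range, Nat.add_choose_eq,
    Nat.sum_antidiagonal_eq_sum_range_succ (fun x y => b.choose x * c.choose y)]
  refine sum_congr (by congr 1; omega) fun x hx => ?_
  rw [mem_range] at hx
  congr 2 <;> omega

theorem Nat.sum_Icc_sum_Icc_choose_mul_choose_mul_choose (a b c k : ℕ) :
    ∑ i ∈ Icc 1 (k + 2), ∑ j ∈ Icc (i + 1) (k + 2),
      a.choose (i - 1) * b.choose (j - i - 1) * c.choose (k + 2 - j)
      = (a + b + c).choose k := by
  have inner : ∀ i ∈ Icc 1 (k + 1), ∑ j ∈ Icc (i + 1) (k + 2),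
      a.choose (i - 1) * b.choose (j - i - 1) * c.choose (k + 2 - j)
      = a.choose (i - 1) * (b + c).choose (1 + k - i) := by
    intro i hi
    obtain ⟨d, hd, hd'⟩ : ∃ d, k + 2 = i + 1 + d ∧ 1 + k - i = d :=
      ⟨k + 1 - i, by grind⟩
    simp only [mul_assoc]
    rw [← mul_sum, hd, hd', ← Nat.sum_Icc_choose_mul_choose b c (i + 1) d]
    simp only [Nat.sub_sub]
  -- the term `i = k + 2` has an empty `j`-range, which `inner` would misread as `1`
  rw [sum_Icc_succ_top (a := 1) (b := k + 1) (by omega),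
    Icc_eq_empty (show ¬k + 1 + 1 + 1 ≤ k + 2 by omega), sum_empty, add_zero,
    sum_congr rfl inner, add_assoc]
  simpa only [add_comm 1 k] using Nat.sum_Icc_choose_mul_choose a (b + c) 1 k

theorem mul_le_sq_div_four {x y s : ℝ} (h0 : 0 ≤ x + y) (h : x + y ≤ s) :
    x * y ≤ s ^ 2 / 4 := by
  nlinarith [sq_nonneg (x - y)]

theorem Nat.cast_choose_four (n : ℕ) :
    ((n + 2).choose 4 : ℝ) = (n + 2) * (n + 1) * n * (n - 1) / 24 := by
  rcases n with _ | n
  · simp [Nat.choose_eq_zero_of_lt]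
  · rw [Nat.cast_choose_eq_ascPochhammer_div]
    simp [ascPochhammer_succ_eval, Nat.factorial]
    ring

theorem Nat.add_two_mul_add_one_mul_choose (N n : ℕ) :
    (n + 2) * (n + 1) * N.choose (n + 2) = N * (N - 1) * (N - 2).choose n := by
  rcases N with _ | _ | M
  · simp
  · simp [Nat.choose_eq_zero_of_lt]
  · have h1 := Nat.add_one_mul_choose_eq M n
    have h2 := Nat.add_one_mul_choose_eq (M + 1) (n + 1)
    simp only [Nat.add_sub_cancel]
    grind

theorem Nat.cast_choose_sub_two_div_choose {N n : ℕ} (h : n + 2 ≤ N) :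
    ((N - 2).choose n : ℝ) / N.choose (n + 2) = (n + 2) * (n + 1) / (N * (N - 1)) := by
  have hN : (2 : ℝ) ≤ N := by exact_mod_cast (by omega : 2 ≤ N)
  rw [div_eq_div_iff (by exact_mod_cast (Nat.choose_pos h).ne') (by nlinarith)]
  have := congrArg (Nat.cast (R := ℝ)) (Nat.add_two_mul_add_one_mul_choose N n)
  push_cast [Nat.cast_sub (by omega : 1 ≤ N)] at this
  linarith

theorem sq_div_four_div_choose_four_mul_choose_ratio_le {n N : ℕ} (hn : 2 ≤ n)
    (hnN : n + 2 ≤ N) :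
    (n : ℝ) ^ 2 / 4 / (n + 2).choose 4 * ((N - 2).choose n / N.choose (n + 2))
      ≤ 24 / (N : ℝ) ^ 2 := by
  have hn' : (2 : ℝ) ≤ n := by exact_mod_cast hn
  have hN' : (n : ℝ) + 2 ≤ N := by exact_mod_cast hnN
  have hclosed : (n : ℝ) ^ 2 / 4 / (n + 2).choose 4 * ((N - 2).choose n / N.choose (n + 2))
      = 6 * n / ((n - 1) * N * (N - 1)) := by
    rw [Nat.cast_choose_four, Nat.cast_choose_sub_two_div_choose hnN]
    field_simp
    ring
  rw [hclosed, div_le_div_iff₀ (mul_pos (mul_pos (by linarith) (by linarith)) (by linarith))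
    (by nlinarith)]
  nlinarith [mul_nonneg (by linarith : (0 : ℝ) ≤ n - 2) (by linarith : (0 : ℝ) ≤ N - 4)]

/-- `λ_{2;lm} = ∑_{1 ≤ i < j ≤ n+2} p_{2;ij} p_{2;ijlm} ≤ 24/N²`. -/
theorem stmt_17 (N n l m : ℕ) (hn : 2 ≤ n) (hnN : n + 2 ≤ N)
    (hl : 1 ≤ l) (hlm : l < m) (hm : m ≤ N) :
    ∑ i ∈ Icc 1 (n + 2), ∑ j ∈ Icc (i + 1) (n + 2),
        (((i : ℝ) - 1) * ((n : ℝ) + 2 - j) / Nat.choose (n + 2) 4)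
          * ((Nat.choose (l - 1) (i - 1) : ℝ) * Nat.choose (m - l - 1) (j - i - 1)
              * Nat.choose (N - m) (n + 2 - j) / Nat.choose N (n + 2))
      ≤ 24 / (N : ℝ) ^ 2 := by
  have hweight : ∀ i ∈ Icc 1 (n + 2), ∀ j ∈ Icc (i + 1) (n + 2),
      ((i : ℝ) - 1) * ((n : ℝ) + 2 - j) / Nat.choose (n + 2) 4
        ≤ (n : ℝ) ^ 2 / 4 / Nat.choose (n + 2) 4 := by
    intro i hi j hj
    rw [mem_Icc] at hi hj
    have hi' : (1 : ℝ) ≤ i := by exact_mod_cast hi.1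
    have hij : (i : ℝ) + 1 ≤ j := by exact_mod_cast hj.1
    have hj' : (j : ℝ) ≤ n + 2 := by exact_mod_cast hj.2
    gcongr
    exact mul_le_sq_div_four (by linarith) (by linarith)
  have hsum : ∑ i ∈ Icc 1 (n + 2), ∑ j ∈ Icc (i + 1) (n + 2),
      (Nat.choose (l - 1) (i - 1) : ℝ) * Nat.choose (m - l - 1) (j - i - 1)
        * Nat.choose (N - m) (n + 2 - j) = Nat.choose (N - 2) n := by
    rw [show N - 2 = l - 1 + (m - l - 1) + (N - m) by omega,
      ← Nat.sum_Icc_sum_Icc_choose_mul_choose_mul_choose]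
    push_cast
    rfl
  calc _ ≤ ∑ i ∈ Icc 1 (n + 2), ∑ j ∈ Icc (i + 1) (n + 2),
        (n : ℝ) ^ 2 / 4 / Nat.choose (n + 2) 4
          * ((Nat.choose (l - 1) (i - 1) : ℝ) * Nat.choose (m - l - 1) (j - i - 1)
              * Nat.choose (N - m) (n + 2 - j) / Nat.choose N (n + 2)) :=
        sum_le_sum fun i hi => sum_le_sum fun j hj =>
          mul_le_mul_of_nonneg_right (hweight i hi j hj) (by positivity)
    _ = (n : ℝ) ^ 2 / 4 / Nat.choose (n + 2) 4
          * (Nat.choose (N - 2) n / Nat.choose N (n + 2)) := by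
        simp only [← mul_sum, ← sum_div, hsum]
    _ ≤ 24 / (N : ℝ) ^ 2 := sq_div_four_div_choose_four_mul_choose_ratio_le hn hnN
end
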